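/- If f : [0,1] → ℝ is continuous, then for every n > 1 and x ∈ [0,1], |R_n(f;x) − f(x)| ≤ ω(n^{−1/2}) (1 + x(1−x)(1 − min{x,1−x})), where ω is the modulus of continuity of f. -/

import Mathlib

/-- Generalized rising factorial with increment `h`: `x^(m,h) = x(x+h)···(x+(m-1)h)`. -/
noncomputable def rfac (x h : ℝ) (m : ℕ) : ℝ := ∏ i ∈ Finset.range m, (x + i * h)

/-- Pólya urn probability `p_{n,k}^{a,b,c}`. -/
noncomputable def polyaProb (a b c : ℝ) (n k : ℕ) : ℝ :=
  (n.choose k : ℝ) * rfac a c k * rfac b c (n - k) / rfac (a + b) c n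

/-- The operator `R_n(f;x)` with `c = -min{x,1-x}/(n-1)`. -/
noncomputable def Rop (n : ℕ) (f : ℝ → ℝ) (x : ℝ) : ℝ :=
  ∑ k ∈ Finset.range (n + 1),
    polyaProb x (1 - x) (-(min x (1 - x)) / ((n : ℝ) - 1)) n k * f ((k : ℝ) / n)

/-- Modulus of continuity of `f` on `[a,b]`. -/
noncomputable def modulus (f : ℝ → ℝ) (a b δ : ℝ) : ℝ :=
  sSup {d : ℝ | ∃ u ∈ Set.Icc a b, ∃ v ∈ Set.Icc a b, |u - v| ≤ δ ∧ d = |f u - f v|}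

/-!
`R_n f (x)` is a weighted mean of the values `f (k / n)` with nonnegative Pólya-urn weights, and
for such means the Shisha–Mond argument applies: chaining `|f u - f v| ≤ ⌈|u - v| / δ⌉ ω(δ)` and
`⌈λ⌉ ≤ 1 + λ²` gives `|R_n f (x) - f x| ≤ ω(δ) (1 + δ⁻² E (X/n - x)²)`. The moments of the urn
distribution come from the Vandermonde identity `∑ C(n,k) a^(k,c) b^(n-k,c) = (a+b)^(n,c)` for
generalized rising factorials, which yields `n E (X/n - x)² = x(1-x)(1+nc)/(1+c)`. With
`(n-1)c = -min{x,1-x}` the last factor is at most `1 - min{x,1-x}`, and `δ = n^{-1/2}` finishes.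
-/

open Finset Set

section RisingFactorial

variable (x h : ℝ) (m : ℕ)

lemma rfac_succ : rfac x h (m + 1) = rfac x h m * (x + m * h) :=
  prod_range_succ _ _

lemma rfac_succ' : rfac x h (m + 1) = x * rfac (x + h) h m := by
  rw [rfac, prod_range_succ', rfac, mul_comm]
  simp only [CharP.cast_eq_zero, zero_mul, add_zero]
  congr 1
  refine prod_congr rfl fun i _ ↦ ?_
  push_cast
  ring

lemma rfac_nonneg (hx : ∀ i < m, 0 ≤ x + i * h) : 0 ≤ rfac x h m :=
  prod_nonneg fun i hi ↦ hx i (mem_range.mp hi)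

lemma rfac_pos (hx : ∀ i < m, 0 < x + i * h) : 0 < rfac x h m :=
  prod_pos fun i hi ↦ hx i (mem_range.mp hi)

end RisingFactorial

noncomputable def polyaWeight (a b c : ℝ) (n k : ℕ) : ℝ :=
  (n.choose k : ℝ) * rfac a c k * rfac b c (n - k)

section PolyaWeight

variable (a b c : ℝ)

theorem sum_polyaWeight (n : ℕ) :
    ∑ k ∈ range (n + 1), polyaWeight a b c n k = rfac (a + b) c n := by
  induction n with
  | zero => simp [polyaWeight, rfac]
  | succ n ih =>
    have pascal := sum_choose_succ_mul (fun i j ↦ rfac a c i * rfac b c j) n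
    simp only [← mul_assoc] at pascal
    simp only [polyaWeight, pascal, rfac_succ (a + b), ← ih, sum_mul, ← sum_add_distrib]
    refine sum_congr rfl fun i hi ↦ ?_
    have hin : i ≤ n := Nat.lt_succ_iff.mp (mem_range.mp hi)
    rw [Nat.sub_add_comm hin, rfac_succ, rfac_succ, Nat.cast_sub hin]
    ring

-- `k C(n+1,k) = (n+1) C(n,k-1)` and `a^(k,c) = a (a+c)^(k-1,c)` lower the level by one.
lemma sum_natCast_mul_polyaWeight_succ (g : ℕ → ℝ) (n : ℕ) :
    ∑ k ∈ range (n + 2), k * g k * polyaWeight a b c (n + 1) k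
      = (n + 1) * a * ∑ k ∈ range (n + 1), g (k + 1) * polyaWeight (a + c) b c n k := by
  rw [sum_range_succ', mul_sum]
  simp only [CharP.cast_eq_zero, zero_mul, add_zero]
  refine sum_congr rfl fun k _ ↦ ?_
  have hchoose : ((n + 1 : ℕ) * n.choose k : ℝ) = (n + 1).choose (k + 1) * (k + 1 : ℕ) := by
    exact_mod_cast Nat.add_one_mul_choose_eq n k
  simp only [polyaWeight, Nat.add_sub_add_right, rfac_succ']
  push_cast at hchoose ⊢
  linear_combination -(a * g (k + 1) * rfac (a + c) c k * rfac b c (n - k)) * hchoose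

theorem sum_natCast_mul_polyaWeight (n : ℕ) :
    ∑ k ∈ range (n + 2), k * polyaWeight a b c (n + 1) k = (n + 1) * a * rfac (a + b + c) c n := by
  have := sum_natCast_mul_polyaWeight_succ a b c (fun _ ↦ 1) n
  simp only [mul_one, one_mul, sum_polyaWeight] at this
  rw [this, add_right_comm]

theorem sum_natCast_mul_sub_one_mul_polyaWeight (n : ℕ) :
    ∑ k ∈ range (n + 3), k * (k - 1) * polyaWeight a b c (n + 2) k
      = (n + 2) * (n + 1) * a * (a + c) * rfac (a + b + 2 * c) c n := by
  have := sum_natCast_mul_polyaWeight_succ a b c (fun k ↦ (k : ℝ) - 1) (n + 1)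
  push_cast at this
  simp only [add_sub_cancel_right, sum_natCast_mul_polyaWeight] at this
  rw [this]
  ring_nf

end PolyaWeight

lemma rfac_one_add_two (c : ℝ) (n : ℕ) : rfac 1 c (n + 2) = (1 + c) * rfac (1 + 2 * c) c n := by
  rw [rfac_succ', rfac_succ', one_mul, add_assoc, ← two_mul]

theorem sum_polyaWeight_mul_sub_sq (x c : ℝ) (n : ℕ) :
    ∑ k ∈ range (n + 3), polyaWeight x (1 - x) c (n + 2) k * (k - (n + 2) * x) ^ 2
      = (n + 2) * x * (1 - x) * (1 + (n + 2) * c) * rfac (1 + 2 * c) c n := by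
  have h0 := sum_polyaWeight x (1 - x) c (n + 2)
  have h1 := sum_natCast_mul_polyaWeight x (1 - x) c (n + 1)
  have h2 := sum_natCast_mul_sub_one_mul_polyaWeight x (1 - x) c n
  simp only [add_sub_cancel, rfac_one_add_two, Nat.reduceAdd, add_assoc] at h0 h1 h2
  rw [rfac_succ', add_assoc, ← two_mul] at h1
  push_cast at h1
  calc _ = ∑ k ∈ range (n + 3), (k * (k - 1) * polyaWeight x (1 - x) c (n + 2) k
          + (1 - 2 * (n + 2) * x) * (k * polyaWeight x (1 - x) c (n + 2) k)
          + ((n + 2) * x) ^ 2 * polyaWeight x (1 - x) c (n + 2) k) :=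
        sum_congr rfl fun k _ ↦ by ring
    _ = _ := by
        rw [sum_add_distrib, sum_add_distrib, ← mul_sum, ← mul_sum, h0, h1, h2]
        ring

section PolyaProb

variable {a b c : ℝ} {n : ℕ}

lemma polyaProb_eq_div (k : ℕ) : polyaProb a b c n k = polyaWeight a b c n k / rfac (a + b) c n :=
  rfl

theorem sum_polyaProb (h : rfac (a + b) c n ≠ 0) : ∑ k ∈ range (n + 1), polyaProb a b c n k = 1 := by
  simp_rw [polyaProb_eq_div, ← sum_div, sum_polyaWeight, div_self h]

lemma polyaProb_nonneg (ha : ∀ i < n, 0 ≤ a + i * c) (hb : ∀ i < n, 0 ≤ b + i * c) (k : ℕ) :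
    0 ≤ polyaProb a b c n k := by
  rcases le_or_gt k n with hk | hk
  · refine div_nonneg (mul_nonneg (mul_nonneg (Nat.cast_nonneg _) ?_) ?_) ?_
    · exact rfac_nonneg _ _ _ fun i hi ↦ ha i (by omega)
    · exact rfac_nonneg _ _ _ fun i hi ↦ hb i (by omega)
    · refine rfac_nonneg _ _ _ fun i hi ↦ ?_
      have hb0 := hb 0 (by omega)
      rw [CharP.cast_eq_zero, zero_mul, add_zero] at hb0
      linarith [ha i hi]
  · simp [polyaProb, Nat.choose_eq_zero_of_lt hk]

theorem sum_polyaProb_mul_div_sub_sq {x : ℝ} (hn : 2 ≤ n) (h : rfac 1 c n ≠ 0) :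
    ∑ k ∈ range (n + 1), polyaProb x (1 - x) c n k * (k / n - x) ^ 2
      = x * (1 - x) * (1 + n * c) / (n * (1 + c)) := by
  obtain ⟨n, rfl⟩ := Nat.exists_eq_add_of_le' hn
  rw [rfac_one_add_two] at h
  have hc : 1 + c ≠ 0 := left_ne_zero_of_mul h
  have hR : rfac (1 + 2 * c) c n ≠ 0 := right_ne_zero_of_mul h
  have hn0 : (n + 2 : ℝ) ≠ 0 := by positivity
  simp_rw [polyaProb_eq_div, add_sub_cancel, rfac_one_add_two]
  calc _ = (∑ k ∈ range (n + 3), polyaWeight x (1 - x) c (n + 2) k * (k - (n + 2) * x) ^ 2)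
        / ((1 + c) * rfac (1 + 2 * c) c n * (n + 2) ^ 2) := by
        rw [sum_div]
        refine sum_congr rfl fun k _ ↦ ?_
        push_cast
        field_simp
    _ = _ := by
        rw [sum_polyaWeight_mul_sub_sq]
        push_cast
        field_simp

end PolyaProb

lemma Nat.ceil_le_one_add_sq {α : Type*} [CommRing α] [LinearOrder α] [IsStrictOrderedRing α]
    [FloorSemiring α] {r : α} (hr : 0 ≤ r) : (⌈r⌉₊ : α) ≤ 1 + r ^ 2 := by
  rcases le_or_gt r 1 with hr1 | hr1
  · have : ⌈r⌉₊ ≤ 1 := Nat.ceil_le.mpr (by simpa using hr1)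
    have : (⌈r⌉₊ : α) ≤ 1 := by exact_mod_cast this
    nlinarith
  · nlinarith [Nat.ceil_lt_add_one hr]

section Modulus

variable {f : ℝ → ℝ} {a b δ : ℝ}

lemma bddAbove_modulus_set (hf : ContinuousOn f (Icc a b)) :
    BddAbove {d : ℝ | ∃ u ∈ Icc a b, ∃ v ∈ Icc a b, |u - v| ≤ δ ∧ d = |f u - f v|} := by
  obtain ⟨C, hC⟩ := isCompact_Icc.exists_bound_of_continuousOn hf
  refine ⟨2 * C, ?_⟩
  rintro d ⟨u, hu, v, hv, -, rfl⟩
  have hu' := hC u hu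
  have hv' := hC v hv
  rw [Real.norm_eq_abs] at hu' hv'
  linarith [abs_sub (f u) (f v)]

lemma abs_sub_le_modulus (hf : ContinuousOn f (Icc a b)) {u v : ℝ} (hu : u ∈ Icc a b)
    (hv : v ∈ Icc a b) (h : |u - v| ≤ δ) : |f u - f v| ≤ modulus f a b δ :=
  le_csSup (bddAbove_modulus_set hf) ⟨u, hu, v, hv, h, rfl⟩

lemma modulus_nonneg (hf : ContinuousOn f (Icc a b)) (hab : a ≤ b) (hδ : 0 ≤ δ) :
    0 ≤ modulus f a b δ := by
  have ha : a ∈ Icc a b := left_mem_Icc.mpr hab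
  simpa using abs_sub_le_modulus hf ha ha (by simpa using hδ)

lemma abs_sub_le_ceil_mul_modulus (hf : ContinuousOn f (Icc a b)) (hδ : 0 < δ) {u v : ℝ}
    (hu : u ∈ Icc a b) (hv : v ∈ Icc a b) :
    |f u - f v| ≤ ⌈|u - v| / δ⌉₊ * modulus f a b δ := by
  rcases eq_or_ne u v with rfl | huv
  · simp
  set N := ⌈|u - v| / δ⌉₊
  have hN : (0 : ℝ) < N := by
    exact_mod_cast Nat.ceil_pos.mpr (div_pos (abs_pos.mpr (sub_ne_zero.mpr huv)) hδ)
  set w : ℕ → ℝ := fun i ↦ v + ((i : ℝ) / N) • (u - v)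
  have hw : ∀ i ≤ N, w i ∈ Icc a b := fun i hi ↦
    (convex_Icc a b).add_smul_sub_mem hv hu
      ⟨by positivity, div_le_one_of_le₀ (by exact_mod_cast hi) hN.le⟩
  have hstep : ∀ i ∈ range N, |f (w (i + 1)) - f (w i)| ≤ modulus f a b δ := by
    intro i hi
    have hi := mem_range.mp hi
    refine abs_sub_le_modulus hf (hw _ hi) (hw _ hi.le) ?_
    have hdiff : w (i + 1) - w i = (u - v) / N := by
      simp only [w, smul_eq_mul]
      push_cast
      ring
    rw [hdiff, abs_div, abs_of_pos hN, div_le_iff₀ hN, mul_comm, ← div_le_iff₀ hδ]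
    exact Nat.le_ceil _
  have hw0 : w 0 = v := by simp [w]
  have hwN : w N = u := by simp [w, hN.ne']
  calc |f u - f v| = |∑ i ∈ range N, (f (w (i + 1)) - f (w i))| := by
        rw [sum_range_sub (fun i ↦ f (w i)), hw0, hwN]
    _ ≤ ∑ i ∈ range N, |f (w (i + 1)) - f (w i)| := abs_sum_le_sum_abs _ _
    _ ≤ ∑ _i ∈ range N, modulus f a b δ := sum_le_sum hstep
    _ = N * modulus f a b δ := by rw [sum_const, card_range, nsmul_eq_mul]

lemma abs_sub_le_one_add_sq_mul_modulus (hf : ContinuousOn f (Icc a b)) (hδ : 0 < δ) {u v : ℝ}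
    (hu : u ∈ Icc a b) (hv : v ∈ Icc a b) :
    |f u - f v| ≤ (1 + ((u - v) / δ) ^ 2) * modulus f a b δ := by
  have hceil := Nat.ceil_le_one_add_sq (div_nonneg (abs_nonneg (u - v)) hδ.le)
  rw [div_pow, sq_abs, ← div_pow] at hceil
  exact (abs_sub_le_ceil_mul_modulus hf hδ hu hv).trans <|
    mul_le_mul_of_nonneg_right hceil (modulus_nonneg hf (hu.1.trans hu.2) hδ.le)

theorem abs_sum_mul_sub_le_modulus {ι : Type*} {s : Finset ι} {p t : ι → ℝ} {x : ℝ}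
    (hf : ContinuousOn f (Icc a b)) (hδ : 0 < δ) (hp : ∀ i ∈ s, 0 ≤ p i)
    (hp1 : ∑ i ∈ s, p i = 1) (ht : ∀ i ∈ s, t i ∈ Icc a b) (hx : x ∈ Icc a b) :
    |∑ i ∈ s, p i * f (t i) - f x|
      ≤ modulus f a b δ * (1 + (∑ i ∈ s, p i * (t i - x) ^ 2) / δ ^ 2) := by
  calc |∑ i ∈ s, p i * f (t i) - f x| = |∑ i ∈ s, p i * (f (t i) - f x)| := by
        simp_rw [mul_sub, sum_sub_distrib, ← sum_mul, hp1, one_mul]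
    _ ≤ ∑ i ∈ s, p i * |f (t i) - f x| := by
        refine (abs_sum_le_sum_abs _ _).trans (sum_le_sum fun i hi ↦ ?_)
        rw [abs_mul, abs_of_nonneg (hp i hi)]
    _ ≤ ∑ i ∈ s, p i * ((1 + ((t i - x) / δ) ^ 2) * modulus f a b δ) :=
        sum_le_sum fun i hi ↦ mul_le_mul_of_nonneg_left
          (abs_sub_le_one_add_sq_mul_modulus hf hδ (ht i hi) hx) (hp i hi)
    _ = modulus f a b δ * (∑ i ∈ s, p i + (∑ i ∈ s, p i * (t i - x) ^ 2) / δ ^ 2) := by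
        rw [sum_div, ← sum_add_distrib, mul_sum]
        exact sum_congr rfl fun i _ ↦ by ring
    _ = _ := by rw [hp1]

end Modulus

noncomputable def RopParam (n : ℕ) (x : ℝ) : ℝ := -(min x (1 - x)) / ((n : ℝ) - 1)

lemma Rop_eq_sum (n : ℕ) (f : ℝ → ℝ) (x : ℝ) :
    Rop n f x = ∑ k ∈ range (n + 1), polyaProb x (1 - x) (RopParam n x) n k * f (k / n) :=
  rfl

section RopParam

variable {n : ℕ} {x : ℝ}

lemma neg_min_le_natCast_mul_RopParam (hx : x ∈ Icc (0 : ℝ) 1) {i : ℕ} (hi : i < n) :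
    -min x (1 - x) ≤ i * RopParam n x := by
  have hm : 0 ≤ min x (1 - x) := le_min hx.1 (sub_nonneg.mpr hx.2)
  have hi' : (i : ℝ) ≤ n - 1 := by
    have : (i : ℝ) + 1 ≤ n := by exact_mod_cast hi
    linarith
  have hle : (i : ℝ) / (n - 1) ≤ 1 := div_le_one_of_le₀ hi' ((Nat.cast_nonneg i).trans hi')
  calc -min x (1 - x) ≤ -(min x (1 - x) * (i / (n - 1))) :=
        neg_le_neg (mul_le_of_le_one_right hm hle)
    _ = i * RopParam n x := by rw [RopParam]; ring

lemma polyaProb_RopParam_nonneg (hx : x ∈ Icc (0 : ℝ) 1) (k : ℕ) :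
    0 ≤ polyaProb x (1 - x) (RopParam n x) n k := by
  have hmx : min x (1 - x) ≤ x := min_le_left _ _
  have hm1x : min x (1 - x) ≤ 1 - x := min_le_right _ _
  exact polyaProb_nonneg (fun i hi ↦ by linarith [neg_min_le_natCast_mul_RopParam hx hi])
    (fun i hi ↦ by linarith [neg_min_le_natCast_mul_RopParam hx hi]) k

lemma rfac_one_RopParam_pos (hx : x ∈ Icc (0 : ℝ) 1) : 0 < rfac 1 (RopParam n x) n := by
  have hmx : min x (1 - x) ≤ x := min_le_left _ _
  have hm1x : min x (1 - x) ≤ 1 - x := min_le_right _ _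
  exact rfac_pos _ _ _ fun i hi ↦ by linarith [neg_min_le_natCast_mul_RopParam hx hi]

theorem sum_polyaProb_RopParam_mul_div_sub_sq_le (hx : x ∈ Icc (0 : ℝ) 1) (hn : 1 < n) :
    ∑ k ∈ range (n + 1), polyaProb x (1 - x) (RopParam n x) n k * (k / n - x) ^ 2
      ≤ x * (1 - x) * (1 - min x (1 - x)) / n := by
  have hn1 : (0 : ℝ) < n - 1 := by
    have : (1 : ℝ) < n := by exact_mod_cast hn
    linarith
  have hcn : (n - 1) * RopParam n x = -min x (1 - x) := by rw [RopParam]; field_simp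
  rw [sum_polyaProb_mul_div_sub_sq hn (rfac_one_RopParam_pos hx).ne']
  set m := min x (1 - x)
  set c := RopParam n x
  have hm : 0 ≤ m := le_min hx.1 (sub_nonneg.mpr hx.2)
  have hc0 : c ≤ 0 := by nlinarith
  have hc1 : 0 < 1 + c := by
    have h1 := neg_min_le_natCast_mul_RopParam hx hn
    rw [Nat.cast_one, one_mul] at h1
    linarith [min_le_left x (1 - x), min_le_right x (1 - x)]
  -- `(n - 1) c = -m` reduces this to `m c ≤ 0`.
  have hratio : (1 + n * c) / (1 + c) ≤ 1 - m := by
    rw [div_le_iff₀ hc1]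
    nlinarith [mul_nonpos_of_nonneg_of_nonpos hm hc0]
  calc _ = x * (1 - x) * ((1 + n * c) / (1 + c)) / n := by field_simp
    _ ≤ _ := by gcongr; exact mul_nonneg hx.1 (sub_nonneg.mpr hx.2)

end RopParam

theorem Rop_modulus_estimate (f : ℝ → ℝ) (hf : ContinuousOn f (Set.Icc (0 : ℝ) 1))
    (n : ℕ) (hn : 1 < n) (x : ℝ) (hx : x ∈ Set.Icc (0 : ℝ) 1) :
    |Rop n f x - f x| ≤
      modulus f 0 1 ((n : ℝ) ^ (-(1 : ℝ) / 2)) *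
        (1 + x * (1 - x) * (1 - min x (1 - x))) := by
  set δ := (n : ℝ) ^ (-(1 : ℝ) / 2)
  have hδ : 0 < δ := by positivity
  have hδsq : δ ^ 2 = (n : ℝ)⁻¹ := by
    rw [← Real.rpow_natCast, ← Real.rpow_mul (Nat.cast_nonneg n)]
    norm_num [Real.rpow_neg_one]
  have hnodes : ∀ k ∈ range (n + 1), (k : ℝ) / n ∈ Icc (0 : ℝ) 1 := fun k hk ↦
    ⟨by positivity, div_le_one_of_le₀ (by exact_mod_cast Nat.lt_succ_iff.mp (mem_range.mp hk))
      (Nat.cast_nonneg n)⟩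
  have hsum : ∑ k ∈ range (n + 1), polyaProb x (1 - x) (RopParam n x) n k = 1 :=
    sum_polyaProb (by rw [add_sub_cancel]; exact (rfac_one_RopParam_pos hx).ne')
  rw [Rop_eq_sum]
  refine (abs_sum_mul_sub_le_modulus hf hδ (fun k _ ↦ polyaProb_RopParam_nonneg hx k) hsum hnodes
    hx).trans ?_
  gcongr
  · exact modulus_nonneg hf zero_le_one hδ.le
  · have hn0 : (0 : ℝ) < n := by positivity
    rw [hδsq, div_inv_eq_mul, ← le_div_iff₀ hn0]
    exact sum_polyaProb_RopParam_mul_div_sub_sq_le hx hn
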